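/- arXiv:2511.15945 — 6 statements merged into one kernel-verified Lean document; each statement's English description precedes it below -/
import Mathlib

section
/- In a monoid S, if e is an idempotent, then the H-cell containing e (the intersection of the left cell and right cell of e) is a group with identity element e. -/
/-- The H-cell of an element `e` of a monoid: the intersection of the left cell
(mutual left-divisibility class) and the right cell of `e`. -/
def HCell {S : Type*} [Monoid S] (e : S) : Set S :=
  {x : S | (∃ c : S, x = c * e) ∧ (∃ c : S, e = c * x) ∧
           (∃ d : S, x = e * d) ∧ (∃ d : S, e = x * d)}

/-- If `e` is an idempotent of a monoid `S`, then the H-cell containing `e`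
is a group with identity element `e`. -/
theorem stmt2 {S : Type*} [Monoid S] (e : S) (he : e * e = e) :
    e ∈ HCell e ∧
    (∀ x ∈ HCell e, e * x = x ∧ x * e = x) ∧
    (∀ x ∈ HCell e, ∀ y ∈ HCell e, x * y ∈ HCell e) ∧
    (∀ x ∈ HCell e, ∃ y ∈ HCell e, x * y = e ∧ y * x = e) := by
  have hid : ∀ x ∈ HCell e, e * x = x ∧ x * e = x := by
    rintro x ⟨⟨c, hc⟩, -, ⟨d, hd⟩, -⟩
    constructor
    · rw [hd, ← mul_assoc, he]
    · rw [hc, mul_assoc, he]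
  refine ⟨⟨⟨1, by simp⟩, ⟨1, by simp⟩, ⟨1, by simp⟩, ⟨1, by simp⟩⟩, hid, ?_, ?_⟩
  · rintro x hx y hy
    obtain ⟨⟨cx, hcx⟩, ⟨cx', hcx'⟩, ⟨dx, hdx⟩, ⟨dx', hdx'⟩⟩ := hx
    obtain ⟨⟨cy, hcy⟩, ⟨cy', hcy'⟩, ⟨dy, hdy⟩, ⟨dy', hdy'⟩⟩ := hy
    obtain ⟨hey, hye⟩ := hid y ⟨⟨cy, hcy⟩, ⟨cy', hcy'⟩, ⟨dy, hdy⟩, ⟨dy', hdy'⟩⟩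
    obtain ⟨hex, hxe⟩ := hid x ⟨⟨cx, hcx⟩, ⟨cx', hcx'⟩, ⟨dx, hdx⟩, ⟨dx', hdx'⟩⟩
    refine ⟨⟨x * cy, by rw [mul_assoc, ← hcy]⟩,
      ⟨cy' * cx', ?_⟩, ⟨dx * y, by rw [← mul_assoc, ← hdx]⟩, ⟨dy' * dx', ?_⟩⟩
    · calc e = cy' * y := hcy'
        _ = cy' * (e * y) := by rw [hey]
        _ = cy' * (cx' * x * y) := by rw [← hcx']
        _ = cy' * cx' * (x * y) := by simp [mul_assoc]
    · calc e = x * dx' := hdx'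
        _ = x * e * dx' := by rw [hxe]
        _ = x * (y * dy') * dx' := by rw [← hdy']
        _ = x * y * (dy' * dx') := by rw [← mul_assoc, mul_assoc]
  · rintro x hx
    obtain ⟨⟨c0, hc0⟩, ⟨c, hc⟩, ⟨d0, hd0⟩, ⟨d, hd⟩⟩ := hx
    obtain ⟨hex, hxe⟩ := hid x ⟨⟨c0, hc0⟩, ⟨c, hc⟩, ⟨d0, hd0⟩, ⟨d, hd⟩⟩
    have hyx : (e * c) * x = e := by rw [mul_assoc, ← hc, he]
    have hxy : x * (d * e) = e := by rw [← mul_assoc, ← hd, he]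
    have hkey : e * c * e = e * (d * e) := by
      calc e * c * e = e * c * (x * (d * e)) := by rw [hxy]
        _ = (e * c * x) * (d * e) := by simp [mul_assoc]
        _ = e * (d * e) := by rw [hyx]
    have h1 : x * (e * c * e) = e := by
      rw [hkey, ← mul_assoc, hxe, hxy]
    have h2 : (e * c * e) * x = e := by
      rw [mul_assoc, mul_assoc, hex, ← mul_assoc, hyx]
    exact ⟨e * c * e, ⟨⟨e * c, rfl⟩, ⟨x, h1.symm⟩,
      ⟨c * e, by rw [mul_assoc]⟩, ⟨x, h2.symm⟩⟩, h1, h2⟩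
end

section
/- If a finite monoid S is regular (every J-cell contains an idempotent), then S is null-connected: every element of S that is not a unit can be written as a product of two non-units. -/
/-- Two-sided (J) cell preorder on a monoid: `a ≤_{lr} b` iff `∃ c d, b = c * a * d`. -/
def leLR {S : Type*} [Monoid S] (a b : S) : Prop := ∃ c d : S, b = c * a * d

/-- Two-sided Green's equivalence; its classes are the J-cells. -/
def eqLR {S : Type*} [Monoid S] (a b : S) : Prop := leLR a b ∧ leLR b a

/-- In a finite monoid, a left-invertible element is a unit. -/
lemma isUnit_of_left_inv {S : Type*} [Monoid S] [Finite S] {a w : S} (h : w * a = 1) :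
    IsUnit a := by
  have hinj : Function.Injective (fun x : S => a * x) := by
    intro x y hxy
    have := congrArg (fun t => w * t) hxy
    simpa [← mul_assoc, h] using this
  obtain ⟨z, hz⟩ := (Finite.injective_iff_surjective.mp hinj) 1
  simp only at hz
  have hza : z * a = 1 := by
    have hw : z = w := by
      calc z = 1 * z := (one_mul z).symm
        _ = (w * a) * z := by rw [h]
        _ = w * (a * z) := by rw [mul_assoc]
        _ = w := by rw [hz, mul_one]
    rw [hw, h]
  exact ⟨⟨a, z, hz, hza⟩, rfl⟩

/-- In a finite monoid, a right-invertible element is a unit. -/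
lemma isUnit_of_right_inv {S : Type*} [Monoid S] [Finite S] {a w : S} (h : a * w = 1) :
    IsUnit a := by
  have hw : IsUnit w := isUnit_of_left_inv h
  obtain ⟨z, hz⟩ := hw.exists_right_inv
  have : a = z := by
    calc a = a * (w * z) := by rw [hz, mul_one]
      _ = (a * w) * z := by rw [mul_assoc]
      _ = z := by rw [h, one_mul]
  rw [this]
  exact isUnit_of_left_inv hz

/-- If a finite monoid `S` is regular (every J-cell contains an idempotent), then `S` is
null-connected: every non-unit is a product of two non-units. -/
theorem stmt6 {S : Type*} [Monoid S] [Finite S]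
    (hreg : ∀ x : S, ∃ e : S, e * e = e ∧ eqLR e x) :
    ∀ a : S, ¬ IsUnit a → ∃ b c : S, ¬ IsUnit b ∧ ¬ IsUnit c ∧ a = b * c := by
  intro a ha
  obtain ⟨e, hee, ⟨⟨c, d, hcd⟩, ⟨x, y, hxy⟩⟩⟩ := hreg a
  -- e is not a unit, else a would be a unit
  have heu : ¬ IsUnit e := by
    intro hu
    -- unit idempotent is 1
    obtain ⟨z, hz⟩ := hu.exists_left_inv
    have he1 : e = 1 := by
      calc e = 1 * e := (one_mul e).symm
        _ = (z * e) * e := by rw [hz]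
        _ = z * (e * e) := by rw [mul_assoc]
        _ = z * e := by rw [hee]
        _ = 1 := hz
    rw [he1] at hxy
    -- 1 = x * a * y, so x*a is right-invertible, hence a unit, hence a is left-invertible
    have hxa : IsUnit (x * a) := isUnit_of_right_inv hxy.symm
    obtain ⟨z', hz'⟩ := hxa.exists_left_inv
    have : (z' * x) * a = 1 := by rw [mul_assoc]; exact hz'
    exact ha (isUnit_of_left_inv this)
  refine ⟨c * e, e * d, ?_, ?_, ?_⟩
  · intro hu
    obtain ⟨z, hz⟩ := hu.exists_left_inv
    have : (z * c) * e = 1 := by rw [mul_assoc]; exact hz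
    exact heu (isUnit_of_left_inv this)
  · intro hu
    obtain ⟨z, hz⟩ := hu.exists_right_inv
    have : e * (d * z) = 1 := by rw [← mul_assoc]; exact hz
    exact heu (isUnit_of_right_inv this)
  · calc a = c * e * d := hcd
      _ = c * (e * e) * d := by rw [hee]
      _ = (c * e) * (e * d) := by simp [mul_assoc]
end

section
/- In the m-cyclic Temperley–Lieb monoid mTL_n ≅ C_n^n × ℤ_m with multiplication (a,i)(b,j) = (ab, i+j+Φ(a,b) mod m): if a ≤_l b in TL_n (i.e. ∃c: ca = b in TL_n), then (a,i) ≤_l (b,j) in mTL_n for all i,j ∈ ℤ_m; and if a ≰_l b in TL_n, then (a,i) ≰_l (b,j) in mTL_n for all i,j ∈ ℤ_m. -/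
/-- Multiplication of the `m`-cyclic Temperley–Lieb monoid `mTL_n ≅ C × ℤ_m`, where `C`
is the skeleton monoid `TL_n` and `Φ a b` counts the circles created by stacking. -/
def bubMul {C : Type*} [Monoid C] (Φ : C → C → ℕ) {m : ℕ}
    (p q : C × ZMod m) : C × ZMod m :=
  (p.1 * q.1, p.2 + q.2 + (Φ p.1 q.1 : ZMod m))

/-- In `mTL_n = C × ℤ_m`: if `a ≤_l b` in `TL_n` then `(a,i) ≤_l (b,j)` in `mTL_n` for all
`i, j ∈ ℤ_m`; and if `a ≰_l b` in `TL_n`, then `(a,i) ≰_l (b,j)` for all `i, j ∈ ℤ_m`. -/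
theorem stmt9 (C : Type*) [Monoid C] (Φ : C → C → ℕ) (m : ℕ) (a b : C) :
    ((∃ c : C, c * a = b) →
      ∀ i j : ZMod m, ∃ p : C × ZMod m, bubMul Φ p (a, i) = (b, j)) ∧
    ((¬ ∃ c : C, c * a = b) →
      ∀ i j : ZMod m, ¬ ∃ p : C × ZMod m, bubMul Φ p (a, i) = (b, j)) := by
  constructor
  · rintro ⟨c, hc⟩ i j
    exact ⟨(c, j - i - (Φ c a : ZMod m)), by simp [bubMul, hc]; ring⟩
  · rintro h i j ⟨p, hp⟩
    exact h ⟨p.1, congrArg Prod.fst hp⟩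
end

section
/- In the m-cyclic Temperley–Lieb monoid mTL_n, if a ∈ TL_n is an idempotent, then the element (a, −Φ(a,a) mod m) is an idempotent of mTL_n. Consequently, since TL_n is regular, mTL_n is regular. -/
/-- J-preorder for the multiplication `bubMul`. -/
def bubLeLR {C : Type*} [Monoid C] (Φ : C → C → ℕ) {m : ℕ} (p q : C × ZMod m) : Prop :=
  ∃ c d : C × ZMod m, q = bubMul Φ (bubMul Φ c p) d

/-- J-equivalence (J-cells) for the multiplication `bubMul`. -/
def bubEqLR {C : Type*} [Monoid C] (Φ : C → C → ℕ) {m : ℕ} (p q : C × ZMod m) : Prop :=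
  bubLeLR Φ p q ∧ bubLeLR Φ q p

/-- J-preorder on the skeleton monoid `TL_n`. -/
def skLeLR {C : Type*} [Monoid C] (a b : C) : Prop := ∃ c d : C, b = c * a * d

/-- J-equivalence on the skeleton monoid `TL_n`. -/
def skEqLR {C : Type*} [Monoid C] (a b : C) : Prop := skLeLR a b ∧ skLeLR b a

/-- If `a ≤_J b` in the skeleton, then any lift of `a` lies `≤_J` any lift of `b`. -/
lemma bub_of_sk {C : Type*} [Monoid C] (Φ : C → C → ℕ) {m : ℕ}
    {a b : C} (h : skLeLR a b) (α β : ZMod m) : bubLeLR Φ (a, α) (b, β) := by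
  obtain ⟨c, d, hb⟩ := h
  refine ⟨(c, β - α - (Φ c a : ZMod m) - (Φ (c * a) d : ZMod m)), (d, 0), ?_⟩
  simp [bubMul, hb]
  ring

/-- In `mTL_n`: if `a ∈ TL_n` is idempotent, then `(a, -Φ(a,a))` is an idempotent of
`mTL_n`; consequently, since `TL_n` is regular, `mTL_n` is regular. The circle-counting
function `Φ` satisfies the stacking cocycle identity. -/
theorem stmt10 (C : Type*) [Monoid C] (Φ : C → C → ℕ) (m : ℕ)
    (hΦ : ∀ a b c : C, Φ a (b * c) + Φ b c = Φ (a * b) c + Φ a b) :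
    (∀ a : C, a * a = a →
      bubMul Φ (a, -(Φ a a : ZMod m)) (a, -(Φ a a : ZMod m)) = (a, -(Φ a a : ZMod m))) ∧
    ((∀ x : C, ∃ e : C, e * e = e ∧ skEqLR e x) →
      ∀ p : C × ZMod m, ∃ q : C × ZMod m, bubMul Φ q q = q ∧ bubEqLR Φ q p) := by
  have idem : ∀ a : C, a * a = a →
      bubMul Φ (a, -(Φ a a : ZMod m)) (a, -(Φ a a : ZMod m)) = (a, -(Φ a a : ZMod m)) := by
    intro a ha
    simp [bubMul, ha]
  refine ⟨idem, fun hreg p => ?_⟩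
  obtain ⟨e, he, h1, h2⟩ := hreg p.1
  refine ⟨(e, -(Φ e e : ZMod m)), idem e he, ?_, ?_⟩
  · have := bub_of_sk (m := m) Φ h1 (-(Φ e e : ZMod m)) p.2
    simpa using this
  · have := bub_of_sk (m := m) Φ h2 p.2 (-(Φ e e : ZMod m))
    simpa using this
end

section
/- The m-cyclic Temperley–Lieb monoid mTL_n has the presentation with generators o, u_1, …, u_{n−1} and relations u_i² = o·u_i = u_i·o, u_i u_{i±1} u_i = u_i, u_i u_j = u_j u_i for |i−j| > 1, and o^m = 1. Equivalently, the congruence ≃_m on K_n (identifying diagrams with the same skeleton whose circle counts agree mod m) is the congruence generated by the single relation o^m = 1. -/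
/-!
Every element factors as `x = o ^ n * r`, where `n` is its circle count and `r` the
circle-free element with the same skeleton. As `o` is central, the skeleton of a product
and its circle count modulo `m` depend only on those of the factors, so "same skeleton,
circle counts congruent mod `m`" is a congruence; it contains `o ^ m ≃ 1`, hence contains
the congruence generated by it. Conversely two related elements differ by a factor
`o ^ (m * q)`, which that congruence identifies with `1`.
-/

namespace CircleCount

variable {C M : Type*} [Monoid M] {o : M} {f : M ≃ C × ℕ}

theorem apply_pow_mul (ho : ∀ x : M, f (o * x) = ((f x).1, (f x).2 + 1)) (k : ℕ) (x : M) :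
    f (o ^ k * x) = ((f x).1, (f x).2 + k) := by
  induction k with
  | zero => simp
  | succ k ih => rw [pow_succ', mul_assoc, ho, ih, add_assoc]

theorem eq_pow_mul_of_apply_eq (ho : ∀ x : M, f (o * x) = ((f x).1, (f x).2 + 1))
    {x y : M} {k : ℕ} (hskel : (f x).1 = (f y).1) (hcount : (f x).2 + k = (f y).2) :
    y = o ^ k * x :=
  f.injective (by rw [apply_pow_mul ho]; exact Prod.ext hskel.symm hcount.symm)

theorem pow_count_mul_symm (ho : ∀ x : M, f (o * x) = ((f x).1, (f x).2 + 1)) (x : M) :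
    o ^ (f x).2 * f.symm ((f x).1, 0) = x :=
  (eq_pow_mul_of_apply_eq ho (by simp) (by simp)).symm

theorem apply_mul (ho : ∀ x : M, f (o * x) = ((f x).1, (f x).2 + 1))
    (hcentral : ∀ x : M, Commute o x) (x y : M) :
    f (x * y) =
      ((f (f.symm ((f x).1, 0) * f.symm ((f y).1, 0))).1,
        (f (f.symm ((f x).1, 0) * f.symm ((f y).1, 0))).2 + ((f x).2 + (f y).2)) := by
  conv_lhs => rw [← pow_count_mul_symm ho x, ← pow_count_mul_symm ho y]
  rw [((hcentral _).pow_left _).symm.mul_mul_mul_comm, ← pow_add, apply_pow_mul ho]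

/-- The congruence `≃_m`. -/
def modCon (ho : ∀ x : M, f (o * x) = ((f x).1, (f x).2 + 1))
    (hcentral : ∀ x : M, Commute o x) (m : ℕ) : Con M where
  r x y := (f x).1 = (f y).1 ∧ (f x).2 ≡ (f y).2 [MOD m]
  iseqv :=
    ⟨fun _ => ⟨rfl, rfl⟩, fun h => ⟨h.1.symm, h.2.symm⟩,
      fun h h' => ⟨h.1.trans h'.1, h.2.trans h'.2⟩⟩
  mul' {w x y z} hwx hyz := by
    rw [apply_mul ho hcentral w y, apply_mul ho hcentral x z, hwx.1, hyz.1]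
    exact ⟨rfl, (hwx.2.add hyz.2).add_left _⟩

theorem conGen_pow_mul_rel (m q : ℕ) (x : M) :
    conGen (fun a b : M => a = o ^ m ∧ b = 1) (o ^ (m * q) * x) x := by
  set c := conGen (fun a b : M => a = o ^ m ∧ b = 1)
  have hgen : c (o ^ m) 1 := ConGen.Rel.of _ _ ⟨rfl, rfl⟩
  simpa [pow_mul] using c.mul (c.pow q hgen) (c.refl x)

theorem conGen_eq_modCon (ho : ∀ x : M, f (o * x) = ((f x).1, (f x).2 + 1))
    (hcentral : ∀ x : M, Commute o x) (m : ℕ) :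
    conGen (fun a b : M => a = o ^ m ∧ b = 1) = modCon ho hcentral m := by
  apply le_antisymm
  · refine Con.conGen_le.mpr ?_
    rintro _ _ ⟨rfl, rfl⟩
    have h : f (o ^ m) = ((f 1).1, (f 1).2 + m) := by simpa using apply_pow_mul ho m 1
    exact ⟨by rw [h], by rw [h]; exact Nat.add_modEq_right⟩
  · intro x y ⟨hskel, hcount⟩
    wlog hle : (f x).2 ≤ (f y).2 generalizing x y
    · exact Con.symm _ (this hskel.symm hcount.symm (by omega))
    obtain ⟨q, hq⟩ := (Nat.modEq_iff_dvd' hle).mp hcount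
    rw [eq_pow_mul_of_apply_eq ho hskel (k := m * q) (by omega)]
    exact Con.symm _ (conGen_pow_mul_rel m q x)

end CircleCount

/-- The congruence `≃_m` on the Kauffman monoid `K_n` (identifying elements with the
same skeleton whose circle counts agree mod `m`) is the congruence generated by the
single relation `o^m = 1`. Here `M` is the Kauffman monoid, `f : M ≃ C × ℕ` the
normal-form bijection onto (skeleton, circle count) pairs, and `o` the central circle
generator, which multiplies by incrementing the circle count. -/
theorem stmt14 (C M : Type*) [Monoid M] (m : ℕ) (o : M) (f : M ≃ C × ℕ)
    (ho : ∀ x : M, f (o * x) = ((f x).1, (f x).2 + 1))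
    (hcentral : ∀ x : M, o * x = x * o) :
    ∀ x y : M,
      (conGen (fun a b : M => a = o ^ m ∧ b = 1)) x y ↔
        ((f x).1 = (f y).1 ∧ (f x).2 ≡ (f y).2 [MOD m]) := by
  intro x y
  rw [CircleCount.conGen_eq_modCon ho hcentral m]
  rfl
end

section
/- The cyclic planar rook monoid mPRo_n is an inverse monoid: it is regular and its idempotents commute. In particular, every idempotent of mPRo_n contains no diagonal through strands (its partition contains no pair {i, j'} with i ≠ j), and any two idempotents commute. -/
/-- A planar rook diagram on `n` strands: a strictly order-preserving partial
injection of `Fin n` (through strands join `i` on the bottom to `f i` on the top;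
planarity is exactly strict monotonicity on the domain). -/
def PRoDiag (n : ℕ) :=
  {f : Fin n → Option (Fin n) //
    ∀ ⦃i j : Fin n⦄ ⦃a b : Fin n⦄, f i = some a → f j = some b → i < j → a < b}

/-- The `m`-cyclic planar rook monoid `mPRo_n`: planar rook diagrams together with an
internal-circle count in `ℤ_m`. -/
def CyclicPRo (n m : ℕ) := PRoDiag n × ZMod m

instance (n m : ℕ) : Monoid (CyclicPRo n m) where
  mul p q := (⟨fun i => (q.1.1 i).bind p.1.1, by
    intro i j a b ha hb hij
    obtain ⟨k, hk, hpk⟩ := Option.bind_eq_some_iff.mp ha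
    obtain ⟨l, hl, hpl⟩ := Option.bind_eq_some_iff.mp hb
    exact p.1.2 hpk hpl (q.1.2 hk hl hij)⟩, p.2 + q.2)
  one := (⟨fun i => some i, by intro i j a b ha hb h; simp_all⟩, 0)
  mul_assoc := by
    intro p q r
    refine Prod.ext (Subtype.ext ?_) (add_assoc _ _ _)
    funext i
    show (r.1.1 i).bind (fun k => (q.1.1 k).bind p.1.1) = ((r.1.1 i).bind q.1.1).bind p.1.1
    cases r.1.1 i <;> rfl
  one_mul := by
    intro p
    refine Prod.ext (Subtype.ext ?_) (zero_add _)
    funext i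
    show (p.1.1 i).bind some = p.1.1 i
    cases p.1.1 i <;> rfl
  mul_one := by
    intro p
    exact Prod.ext (Subtype.ext rfl) (add_zero _)

/-!
A planar rook diagram is a strictly monotone partial injection, so its partial inverse is again
planar, and stacking a diagram with its flipped copy and the diagram again gives it back; the
circle count is corrected by negation in `ZMod m`. An idempotent `e` sends a strand `i ↦ j` to
`j ↦ j`, and since `e` is injective on its domain this forces `j = i`: idempotents are partial
identities, and partial identities commute.
-/

namespace PRoDiag

variable {n : ℕ} (f : PRoDiag n)

theorem eq_of_apply_eq_some {i i' j : Fin n} (h : f.1 i = some j) (h' : f.1 i' = some j) :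
    i = i' := by
  rcases lt_trichotomy i i' with hlt | heq | hgt
  · exact absurd (f.2 h h' hlt) (lt_irrefl j)
  · exact heq
  · exact absurd (f.2 h' h hgt) (lt_irrefl j)

open Classical in
noncomputable def invFun (j : Fin n) : Option (Fin n) :=
  if h : ∃ i, f.1 i = some j then some h.choose else none

theorem invFun_eq_some_iff {i j : Fin n} : f.invFun j = some i ↔ f.1 i = some j := by
  unfold invFun
  split_ifs with h
  · refine ⟨?_, fun hi => congrArg some (f.eq_of_apply_eq_some h.choose_spec hi)⟩
    rintro ⟨⟩
    exact h.choose_spec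
  · simpa using fun hi => h ⟨i, hi⟩

noncomputable def inv : PRoDiag n :=
  ⟨f.invFun, by
    intro i j a b ha hb hij
    rw [invFun_eq_some_iff] at ha hb
    refine lt_of_not_ge fun hba => ?_
    rcases hba.lt_or_eq with hlt | rfl
    · exact lt_asymm hij (f.2 hb ha hlt)
    · exact hij.ne (Option.some_injective _ (ha.symm.trans hb))⟩

theorem bind_inv_bind (i : Fin n) :
    (f.1 i).bind (fun k => (f.inv.1 k).bind f.1) = f.1 i := by
  cases hfi : f.1 i with
  | none => rfl
  | some j =>
    have hinv : f.inv.1 j = some i := (f.invFun_eq_some_iff).2 hfi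
    simp [hinv, hfi]

end PRoDiag

namespace CyclicPRo

variable {n m : ℕ}

theorem mul_apply (p q : CyclicPRo n m) (i : Fin n) :
    (p * q).1.1 i = (q.1.1 i).bind p.1.1 := rfl

theorem mul_snd (p q : CyclicPRo n m) : (p * q).2 = p.2 + q.2 := rfl

theorem ext {p q : CyclicPRo n m} (h : ∀ i, p.1.1 i = q.1.1 i) (h₂ : p.2 = q.2) : p = q :=
  Prod.ext (Subtype.ext (funext h)) h₂

noncomputable def inv (a : CyclicPRo n m) : CyclicPRo n m := (a.1.inv, -a.2)

theorem mul_inv_mul (a : CyclicPRo n m) : a * a.inv * a = a :=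
  ext (fun i => a.1.bind_inv_bind i) (by rw [mul_snd, mul_snd, inv, add_neg_cancel, zero_add])

theorem eq_of_isIdempotentElem_of_apply_eq_some {e : CyclicPRo n m} (he : IsIdempotentElem e)
    {i j : Fin n} (hij : e.1.1 i = some j) : j = i := by
  have hjj : e.1.1 j = some j := by
    have := congrArg (fun z : CyclicPRo n m => z.1.1 i) he
    simpa only [mul_apply, hij, Option.bind_some] using this
  exact e.1.eq_of_apply_eq_some hjj hij

theorem apply_eq_none_or_self_of_isIdempotentElem {e : CyclicPRo n m} (he : IsIdempotentElem e)
    (i : Fin n) : e.1.1 i = none ∨ e.1.1 i = some i := by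
  cases hi : e.1.1 i with
  | none => exact Or.inl rfl
  | some j => exact Or.inr (congrArg some (eq_of_isIdempotentElem_of_apply_eq_some he hi))

theorem mul_comm_of_isIdempotentElem {e f : CyclicPRo n m} (he : IsIdempotentElem e)
    (hf : IsIdempotentElem f) : e * f = f * e := by
  refine ext (fun i => ?_) (add_comm _ _)
  rw [mul_apply, mul_apply]
  rcases apply_eq_none_or_self_of_isIdempotentElem he i with h₁ | h₁ <;>
    rcases apply_eq_none_or_self_of_isIdempotentElem hf i with h₂ | h₂ <;>
    simp [h₁, h₂]

end CyclicPRo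

theorem stmt18_general (n m : ℕ) :
    (∀ a : CyclicPRo n m, ∃ x : CyclicPRo n m, a * x * a = a) ∧
    (∀ e : CyclicPRo n m, e * e = e → ∀ i j : Fin n, e.1.1 i = some j → j = i) ∧
    (∀ e f : CyclicPRo n m, e * e = e → f * f = f → e * f = f * e) :=
  ⟨fun a => ⟨a.inv, a.mul_inv_mul⟩,
    fun _ he _ _ => CyclicPRo.eq_of_isIdempotentElem_of_apply_eq_some he,
    fun _ _ => CyclicPRo.mul_comm_of_isIdempotentElem⟩

/-- The cyclic planar rook monoid `mPRo_n` is an inverse monoid: it is regular, its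
idempotents have no diagonal through strands, and its idempotents commute. -/
theorem stmt18 (n m : ℕ) [NeZero m] :
    (∀ a : CyclicPRo n m, ∃ x : CyclicPRo n m, a * x * a = a) ∧
    (∀ e : CyclicPRo n m, e * e = e → ∀ i j : Fin n, e.1.1 i = some j → j = i) ∧
    (∀ e f : CyclicPRo n m, e * e = e → f * f = f → e * f = f * e) :=
  stmt18_general n m
end
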